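/- Let K₁, K₂, K₃ ∈ ℝ and define on (0, ∞): p₁(t) = t^{2/3} + (1/3)(K₁+K₂)t^{−1/3}, p₂(t) = t^{2/3} + (1/3)(K₂−2K₁)t^{−1/3}, p₃(t) = t^{2/3} + (1/3)(K₁−2K₂)t^{−1/3}, and λ(t) = −(2/3)t² + (4/9)(K₁²+K₂²−K₁K₂)·log t + (4/81)(K₁+K₂)(K₂−2K₁)(K₁−2K₂)·(1/t) + K₃. Then for every t > 0: (i) λ has derivative λ'(t) = −(4/(3t))·p₁(t)·p₂(t)·p₃(t) at t; and (ii) for every cyclic permutation (i, j, k) of (1, 2, 3), if pⱼ(t) ≠ 0 and pₖ(t) ≠ 0 then the function t ↦ pᵢ(t)² has derivative ( −1/(2pⱼ(t)) − 1/(2pₖ(t)) )·λ'(t) at t. Consequently, wherever p₁, p₂, p₃ > 0 and λ' ≠ 0 this parametrized family solves the renormalisation flow equation d(pᵢ²)/dλ = −1/(2pⱼ) − 1/(2pₖ). -/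

import Mathlib

/-!
All three `pᵢ` are instances of `P_c(t) = t^{2/3} + (c/3) t^{-1/3}`, with constants
`c₁ = K₁ + K₂`, `c₂ = K₂ - 2K₁`, `c₃ = K₁ - 2K₂` summing to zero. For such constants
`3t P_{cᵢ}'(t) = P_{cⱼ}(t) + P_{cₖ}(t)`, which is exactly the flow equation once multiplied by
`2P_{cᵢ}`. Writing `P_c(t) = (3t + c) / (3t^{1/3})` turns `p₁p₂p₃` into a rational function of
`t`, whose product with `-4/(3t)` is the derivative of `λ`.
-/

open Real

/-- `p₁(t) = t^{2/3} + (1/3)(K₁+K₂)t^{−1/3}`. -/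
noncomputable def rp1 (K1 K2 t : ℝ) : ℝ :=
  t ^ ((2 : ℝ) / 3) + (1 / 3) * (K1 + K2) * t ^ (-(1 : ℝ) / 3)

/-- `p₂(t) = t^{2/3} + (1/3)(K₂−2K₁)t^{−1/3}`. -/
noncomputable def rp2 (K1 K2 t : ℝ) : ℝ :=
  t ^ ((2 : ℝ) / 3) + (1 / 3) * (K2 - 2 * K1) * t ^ (-(1 : ℝ) / 3)

/-- `p₃(t) = t^{2/3} + (1/3)(K₁−2K₂)t^{−1/3}`. -/
noncomputable def rp3 (K1 K2 t : ℝ) : ℝ :=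
  t ^ ((2 : ℝ) / 3) + (1 / 3) * (K1 - 2 * K2) * t ^ (-(1 : ℝ) / 3)

/-- `λ(t) = −(2/3)t² + (4/9)(K₁²+K₂²−K₁K₂)log t + (4/81)(K₁+K₂)(K₂−2K₁)(K₁−2K₂)(1/t) + K₃`. -/
noncomputable def rlam (K1 K2 K3 t : ℝ) : ℝ :=
  -(2 / 3) * t ^ 2 + (4 / 9) * (K1 ^ 2 + K2 ^ 2 - K1 * K2) * Real.log t
    + (4 / 81) * ((K1 + K2) * (K2 - 2 * K1) * (K1 - 2 * K2)) * (1 / t) + K3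

noncomputable def flowProfile (c t : ℝ) : ℝ :=
  t ^ ((2 : ℝ) / 3) + (1 / 3) * c * t ^ (-(1 : ℝ) / 3)

section FlowProfile

variable {a b c t : ℝ}

lemma flowProfile_eq_div (c : ℝ) (ht : 0 < t) :
    flowProfile c t = (3 * t + c) / (3 * t ^ ((1 : ℝ) / 3)) := by
  have hpos : 0 < t ^ ((1 : ℝ) / 3) := rpow_pos_of_pos ht _
  have h23 : t ^ ((2 : ℝ) / 3) = t / t ^ ((1 : ℝ) / 3) := by
    rw [← rpow_one_sub' ht.le] <;> norm_num
  have h13 : t ^ (-(1 : ℝ) / 3) = (t ^ ((1 : ℝ) / 3))⁻¹ := by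
    rw [← rpow_neg ht.le]; ring_nf
  rw [flowProfile, h23, h13]
  field_simp

lemma flowProfile_mul_mul (ht : 0 < t) :
    flowProfile a t * flowProfile b t * flowProfile c t
      = (3 * t + a) * (3 * t + b) * (3 * t + c) / (27 * t) := by
  have hcube : (t ^ ((1 : ℝ) / 3)) ^ 3 = t := by
    rw [← rpow_natCast, ← rpow_mul ht.le]; norm_num
  have hpos : 0 < t ^ ((1 : ℝ) / 3) := rpow_pos_of_pos ht _
  rw [flowProfile_eq_div a ht, flowProfile_eq_div b ht, flowProfile_eq_div c ht]
  field_simp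
  rw [hcube]
  ring

lemma hasDerivAt_flowProfile_of_add_eq_zero (h : a + b + c = 0) (ht : 0 < t) :
    HasDerivAt (flowProfile a) ((flowProfile b t + flowProfile c t) / (3 * t)) t := by
  have h23 := hasDerivAt_rpow_const (x := t) (p := (2 : ℝ) / 3) (Or.inl ht.ne')
  have h13 := hasDerivAt_rpow_const (x := t) (p := -(1 : ℝ) / 3) (Or.inl ht.ne')
  refine (h23.add (h13.const_mul ((1 / 3) * a))).congr_deriv ?_
  obtain rfl : c = -a - b := by linarith
  rw [rpow_sub_one ht.ne', rpow_sub_one ht.ne', flowProfile, flowProfile]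
  field_simp
  ring

lemma hasDerivAt_flowProfile_sq_of_add_eq_zero (h : a + b + c = 0) (ht : 0 < t)
    (hb : flowProfile b t ≠ 0) (hc : flowProfile c t ≠ 0) :
    HasDerivAt (fun s => flowProfile a s ^ 2)
      ((-1 / (2 * flowProfile b t) - 1 / (2 * flowProfile c t)) *
        (-(4 / (3 * t)) * flowProfile a t * flowProfile b t * flowProfile c t)) t := by
  refine ((hasDerivAt_flowProfile_of_add_eq_zero h ht).fun_pow 2).congr_deriv ?_
  field_simp
  ring

end FlowProfile

lemma rp1_eq (K1 K2 : ℝ) : rp1 K1 K2 = flowProfile (K1 + K2) := rfl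

lemma rp2_eq (K1 K2 : ℝ) : rp2 K1 K2 = flowProfile (K2 - 2 * K1) := rfl

lemma rp3_eq (K1 K2 : ℝ) : rp3 K1 K2 = flowProfile (K1 - 2 * K2) := rfl

lemma hasDerivAt_rlam (K1 K2 K3 : ℝ) {t : ℝ} (ht : 0 < t) :
    HasDerivAt (rlam K1 K2 K3)
      (-(4 / (3 * t)) * rp1 K1 K2 t * rp2 K1 K2 t * rp3 K1 K2 t) t := by
  have hsq : HasDerivAt (fun s : ℝ => -(2 / 3) * s ^ 2) (-(2 / 3) * (2 * t)) t := by
    simpa using (hasDerivAt_pow 2 t).const_mul (-(2 / 3) : ℝ)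
  have hlog := (hasDerivAt_log ht.ne').const_mul ((4 / 9) * (K1 ^ 2 + K2 ^ 2 - K1 * K2))
  have hinv := (hasDerivAt_inv ht.ne').const_mul
    ((4 / 81) * ((K1 + K2) * (K2 - 2 * K1) * (K1 - 2 * K2)))
  simp only [← one_div] at hinv
  refine (((hsq.add hlog).add hinv).add_const K3).congr_deriv ?_
  rw [mul_assoc (-(4 / (3 * t))), mul_assoc (-(4 / (3 * t))), rp1_eq, rp2_eq, rp3_eq,
    flowProfile_mul_mul ht]
  field_simp
  ring

/-- the explicit parametrized solution of the renormalisation flow: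
`λ'(t) = −(4/(3t))p₁p₂p₃` and `d(pᵢ²)/dt = (−1/(2pⱼ) − 1/(2pₖ))·λ'(t)` for every cyclic
permutation `(i,j,k)` of `(1,2,3)`. -/
theorem statement19 (K1 K2 K3 : ℝ) : ∀ t : ℝ, 0 < t →
    HasDerivAt (rlam K1 K2 K3)
      (-(4 / (3 * t)) * rp1 K1 K2 t * rp2 K1 K2 t * rp3 K1 K2 t) t ∧
    (rp2 K1 K2 t ≠ 0 → rp3 K1 K2 t ≠ 0 →
      HasDerivAt (fun s => rp1 K1 K2 s ^ 2)
        ((-1 / (2 * rp2 K1 K2 t) - 1 / (2 * rp3 K1 K2 t)) *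
          (-(4 / (3 * t)) * rp1 K1 K2 t * rp2 K1 K2 t * rp3 K1 K2 t)) t) ∧
    (rp3 K1 K2 t ≠ 0 → rp1 K1 K2 t ≠ 0 →
      HasDerivAt (fun s => rp2 K1 K2 s ^ 2)
        ((-1 / (2 * rp3 K1 K2 t) - 1 / (2 * rp1 K1 K2 t)) *
          (-(4 / (3 * t)) * rp1 K1 K2 t * rp2 K1 K2 t * rp3 K1 K2 t)) t) ∧
    (rp1 K1 K2 t ≠ 0 → rp2 K1 K2 t ≠ 0 →
      HasDerivAt (fun s => rp3 K1 K2 s ^ 2)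
        ((-1 / (2 * rp1 K1 K2 t) - 1 / (2 * rp2 K1 K2 t)) *
          (-(4 / (3 * t)) * rp1 K1 K2 t * rp2 K1 K2 t * rp3 K1 K2 t)) t) := by
  intro t ht
  rw [rp1_eq, rp2_eq, rp3_eq]
  refine ⟨hasDerivAt_rlam K1 K2 K3 ht, fun h2 h3 => ?_, fun h3 h1 => ?_, fun h1 h2 => ?_⟩
  · exact hasDerivAt_flowProfile_sq_of_add_eq_zero (by ring) ht h2 h3
  · exact (hasDerivAt_flowProfile_sq_of_add_eq_zero (by ring) ht h3 h1).congr_deriv (by ring)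
  · exact (hasDerivAt_flowProfile_sq_of_add_eq_zero (by ring) ht h1 h2).congr_deriv (by ring)
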